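/- arXiv:1910.02174 — 2 statements merged into one kernel-verified Lean document; each statement's English description precedes it below -/
import Mathlib

section
/- Let A be an abelian group, B a group, f ∈ ⊕_B A, and B₁ ≤ B a subgroup. Then f lies in the commutator subgroup [⊕_B A, B₁] inside A ≀ B if and only if for every t ∈ B, ∏_{b ∈ B₁} f(bt) = 1. (The product makes sense since f has finite support and A is abelian.) -/
/-!
Since `⁅inl g, inr b⁆ = inl (g * (b • g)⁻¹)`, the commutator subgroup is `inl` of the subgroup
generated by the elements `g * (b • g)⁻¹` with `b ∈ B₁`. The products of a function over the right
cosets `B₁ t` are multiplicative and invariant under left translation by `B₁`, so they vanish on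
these generators. Conversely, if all coset products of `f` vanish and `f x ≠ 1`, then `f` is also
nontrivial at some other point `c * x` of the coset `B₁ x`; multiplying `f` by the generator built
from `g = mulSingle x (f x)` and `c` removes `x` from the support without creating new support
points, and induction on the size of the support concludes.
-/

open Function SemidirectProduct

def restrictedBase (A B : Type*) [Group A] [Group B] : Subgroup (B → A) where
  carrier := {f | (mulSupport f).Finite}
  one_mem' := by simp
  mul_mem' := fun {f g} hf hg => (hf.union hg).subset (mulSupport_mul f g)
  inv_mem' := fun {f} hf => by simpa using hf

lemma shift_finite (A B : Type*) [Group A] [Group B] (b : B) {f : B → A}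
    (hf : (mulSupport f).Finite) : (mulSupport fun x => f (b⁻¹ * x)).Finite := by
  apply (hf.image (fun x => b * x)).subset
  intro x hx
  exact ⟨b⁻¹ * x, hx, by simp⟩

def wreathAut (A B : Type*) [Group A] [Group B] (b : B) : MulAut (restrictedBase A B) where
  toFun f := ⟨fun x => (f : B → A) (b⁻¹ * x), shift_finite A B b f.2⟩
  invFun f := ⟨fun x => (f : B → A) (b * x), by
    have h := shift_finite A B b⁻¹ f.2
    simp only [inv_inv] at h
    exact h⟩
  left_inv f := Subtype.ext (funext fun x => by simp)
  right_inv f := Subtype.ext (funext fun x => by simp)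
  map_mul' f g := rfl

def wreathHom (A B : Type*) [Group A] [Group B] : B →* MulAut (restrictedBase A B) where
  toFun := wreathAut A B
  map_one' := by
    ext f x
    simp [wreathAut]
  map_mul' b c := by
    ext f x
    simp [wreathAut, mul_assoc]

abbrev Wreath (A B : Type*) [Group A] [Group B] :=
  restrictedBase A B ⋊[wreathHom A B] B

section CosetProduct

variable {A B : Type*} [CommMonoid A] [Group B] (H : Subgroup B)

noncomputable def cosetProd (f : B → A) (t : B) : A := ∏ᶠ c : H, f (c * t)

variable {H}

lemma finite_mulSupport_comp_mul_right {f : B → A} (hf : (mulSupport f).Finite) (t : B) :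
    (mulSupport fun c : H => f (c * t)).Finite :=
  hf.preimage fun _ _ _ _ h => Subtype.ext (mul_right_cancel h)

lemma cosetProd_mul {f g : B → A} (hf : (mulSupport f).Finite) (hg : (mulSupport g).Finite)
    (t : B) : cosetProd H (f * g) t = cosetProd H f t * cosetProd H g t :=
  finprod_mul_distrib (finite_mulSupport_comp_mul_right hf t)
    (finite_mulSupport_comp_mul_right hg t)

lemma cosetProd_comp_mul_left (f : B → A) {b : B} (hb : b ∈ H) (t : B) :
    cosetProd H (fun z => f (b * z)) t = cosetProd H f t := by
  simp only [cosetProd, ← mul_assoc]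
  exact finprod_comp_equiv (Equiv.mulLeft (⟨b, hb⟩ : H)) (f := fun c : H => f (c * t))

lemma exists_ne_one_of_cosetProd_eq_one {f : B → A} {t : B} (h : cosetProd H f t = 1)
    (ht : f t ≠ 1) : ∃ c : H, c ≠ 1 ∧ f (c * t) ≠ 1 := by
  by_contra! hc
  refine ht ?_
  rw [← h, cosetProd, finprod_eq_single _ 1 hc, OneMemClass.coe_one, one_mul]

end CosetProduct

lemma mulSupport_mul_inv_mulSingle_ssubset {A B : Type*} [CommGroup A] [DecidableEq B]
    {f : B → A} {x y : B} (hxy : x ≠ y) (hx : f x ≠ 1) (hy : f y ≠ 1) :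
    mulSupport (f * (Pi.mulSingle x (f x) * (Pi.mulSingle y (f x))⁻¹)⁻¹) ⊂ mulSupport f := by
  refine Set.ssubset_iff_subset_ne.2 ⟨fun z hz => ?_, fun h => ?_⟩
  · by_cases hzx : z = x
    · exact hzx ▸ hx
    by_cases hzy : z = y
    · exact hzy ▸ hy
    simpa [Pi.mulSingle_apply, hzx, hzy] using hz
  · have : x ∉ mulSupport (f * (Pi.mulSingle x (f x) * (Pi.mulSingle y (f x))⁻¹)⁻¹) := by
      simp [hxy]
    exact this (h ▸ hx)

namespace Wreath

variable {A B : Type*} [CommGroup A] [Group B]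

lemma coe_wreathHom_apply (b : B) (g : restrictedBase A B) (z : B) :
    (wreathHom A B b g : B → A) z = (g : B → A) (b⁻¹ * z) := rfl

noncomputable def cosetProdHom (H : Subgroup B) : restrictedBase A B →* (B → A) where
  toFun f := cosetProd H f
  map_one' := by ext; simp [cosetProd]
  map_mul' f g := by ext t; exact cosetProd_mul f.2 g.2 t

lemma cosetProdHom_wreathHom {H : Subgroup B} {b : B} (hb : b ∈ H) (g : restrictedBase A B) :
    cosetProdHom H (wreathHom A B b g) = cosetProdHom H g := by
  ext t
  exact cosetProd_comp_mul_left (g : B → A) (inv_mem hb) t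

open scoped commutatorElement in
lemma commutatorElement_inl_inr (g : restrictedBase A B) (b : B) :
    ⁅(inl g : Wreath A B), (inr b : Wreath A B)⁆ = inl (g * (wreathHom A B b g)⁻¹) := by
  rw [commutatorElement_def, ← map_inv (inl : restrictedBase A B →* Wreath A B) g,
    ← map_inv (inr : B →* Wreath A B) b, map_mul,
    ← map_inv (wreathHom A B b), inl_aut, ← mul_assoc, ← mul_assoc]

lemma mul_inv_wreathHom_mem_ker {H : Subgroup B} {b : B} (hb : b ∈ H) (g : restrictedBase A B) :
    g * (wreathHom A B b g)⁻¹ ∈ (cosetProdHom H).ker := by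
  rw [MonoidHom.mem_ker, map_mul, map_inv, cosetProdHom_wreathHom hb, mul_inv_cancel]

lemma inl_mem_commutator_of_mem_ker {H : Subgroup B} {f : restrictedBase A B}
    (hf : f ∈ (cosetProdHom H).ker) :
    (inl f : Wreath A B) ∈
      ⁅(inl : restrictedBase A B →* Wreath A B).range, H.map (inr : B →* Wreath A B)⁆ := by
  classical
  induction hn : (mulSupport (f : B → A)).ncard using Nat.strong_induction_on generalizing f with
  | _ n ih =>
  by_cases hf1 : f = 1
  · rw [hf1, map_one]
    exact one_mem _
  obtain ⟨x, hx⟩ : ∃ x, (f : B → A) x ≠ 1 := by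
    by_contra! h
    exact hf1 (Subtype.ext (funext h))
  obtain ⟨c, hc1, hcx⟩ := exists_ne_one_of_cosetProd_eq_one (congr_fun hf x) hx
  let δ : restrictedBase A B :=
    ⟨Pi.mulSingle x ((f : B → A) x), (Set.finite_singleton x).subset Pi.mulSupport_mulSingle_subset⟩
  let gen := δ * (wreathHom A B c δ)⁻¹
  have hgen : inl gen ∈
      ⁅(inl : restrictedBase A B →* Wreath A B).range, H.map (inr : B →* Wreath A B)⁆ :=
    commutatorElement_inl_inr δ c ▸ Subgroup.commutator_mem_commutator
      (MonoidHom.mem_range.2 ⟨δ, rfl⟩) (Subgroup.mem_map_of_mem _ c.2)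
  have hshift : (wreathHom A B c δ : B → A) = Pi.mulSingle (c * x) ((f : B → A) x) := by
    ext z
    simp [coe_wreathHom_apply, δ, Pi.mulSingle_apply, inv_mul_eq_iff_eq_mul]
  have hxc : x ≠ c * x := fun hx' => hc1 (Subtype.ext (by simpa using mul_eq_right.1 hx'.symm))
  have hsupp : mulSupport ((f * gen⁻¹ : restrictedBase A B) : B → A) ⊂ mulSupport (f : B → A) := by
    simpa [gen, hshift] using mulSupport_mul_inv_mulSingle_ssubset hxc hx hcx
  have hrest := ih _ (hn ▸ Set.ncard_lt_ncard hsupp f.2)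
    (mul_mem hf (inv_mem (mul_inv_wreathHom_mem_ker c.2 δ))) rfl
  rw [← inv_mul_cancel_right f gen, map_mul]
  exact mul_mem hrest hgen

theorem commutator_range_inl_map_inr (H : Subgroup B) :
    ⁅(inl : restrictedBase A B →* Wreath A B).range, H.map (inr : B →* Wreath A B)⁆ =
      (cosetProdHom (A := A) H).ker.map inl := by
  refine le_antisymm ?_
    (Subgroup.map_le_iff_le_comap.2 fun f hf => inl_mem_commutator_of_mem_ker hf)
  rw [Subgroup.commutator_le]
  rintro _ ⟨g, rfl⟩ _ ⟨b, hb, rfl⟩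
  rw [commutatorElement_inl_inr]
  exact Subgroup.mem_map_of_mem _ (mul_inv_wreathHom_mem_ker hb g)

end Wreath

/-- For `A` abelian, `f ∈ [⊕_B A, B₁]` inside `A ≀ B` iff
`∏_{b ∈ B₁} f(b·t) = 1` for every `t ∈ B`. -/
theorem stmt1 (A B : Type*) [CommGroup A] [Group B] (B₁ : Subgroup B)
    (f : restrictedBase A B) :
    (SemidirectProduct.inl f : Wreath A B) ∈
        (⁅(SemidirectProduct.inl : restrictedBase A B →* Wreath A B).range,
          B₁.map (SemidirectProduct.inr : B →* Wreath A B)⁆ : Subgroup (Wreath A B))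
      ↔ ∀ t : B, ∏ᶠ c : B₁, (f : B → A) ((c : B) * t) = 1 := by
  rw [Wreath.commutator_range_inl_map_inr, Subgroup.mem_map_iff_mem inl_injective,
    MonoidHom.mem_ker, funext_iff]
  rfl
end

section
/- Let A and B be groups and N ◁ A ≀ B a normal subgroup of the restricted wreath product. If N ∩ B ≠ {1}, then the subgroup ⊕_B [A,A] (all finitely supported functions B → [A,A]) is contained in N. -/
open Function SemidirectProduct

/-! Write `δₓ(a)` for `restrictedBase.mulSingle x a`. Conjugation by `b ∈ N ∩ B`, `b ≠ 1`,
shifts the base, so the commutator of `δₓ(a)` with `b` puts `δₓ(a) δ_{bx}(a)⁻¹` into `N`. As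
`bx ≠ x`, its commutator with `δₓ(c)` is `δₓ⁅a, c⁆`. Hence the preimage of `N` under `a ↦ δₓ(a)`
contains `[A, A]`, and a finitely supported function with values in `[A, A]` is a finite product
of such `δₓ(a)`. -/

open scoped commutatorElement

theorem SemidirectProduct.commutatorElement_inl_inr {N G : Type*} [Group N] [Group G]
    {φ : G →* MulAut N} (n : N) (g : G) :
    ⁅(inl n : N ⋊[φ] G), (inr g : N ⋊[φ] G)⁆ = inl (n * φ g n⁻¹) := by
  rw [commutatorElement_def, map_mul, inl_aut, map_inv, map_inv]
  group

theorem Pi.commutatorElement_mulSingle {ι : Type*} {G : ι → Type*} [DecidableEq ι]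
    [∀ i, Group (G i)] (f : ∀ i, G i) (i : ι) (c : G i) :
    ⁅f, Pi.mulSingle i c⁆ = Pi.mulSingle i ⁅f i, c⁆ := by
  funext j
  obtain rfl | hj := eq_or_ne j i
  · simp [commutatorElement_def]
  · simp [commutatorElement_def, Pi.mulSingle_eq_of_ne hj]

namespace restrictedBase

variable {A B : Type*} [Group A] [Group B] [DecidableEq B]

def mulSingle (x : B) : A →* restrictedBase A B where
  toFun a := ⟨Pi.mulSingle x a, (Set.finite_singleton x).subset Pi.mulSupport_mulSingle_subset⟩
  map_one' := Subtype.ext (Pi.mulSingle_one x)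
  map_mul' a c := Subtype.ext (Pi.mulSingle_mul (f := fun _ => A) x a c)

@[simp]
theorem coe_mulSingle (x : B) (a : A) :
    ((mulSingle x a : restrictedBase A B) : B → A) = Pi.mulSingle x a :=
  rfl

theorem wreathHom_mulSingle (b x : B) (a : A) :
    wreathHom A B b (mulSingle x a) = mulSingle (b * x) a := by
  ext y
  change (Pi.mulSingle x a : B → A) (b⁻¹ * y) = (Pi.mulSingle (b * x) a : B → A) y
  simp only [Pi.mulSingle_apply, inv_mul_eq_iff_eq_mul]

theorem commutatorElement_mulSingle (f : restrictedBase A B) (x : B) (c : A) :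
    ⁅f, mulSingle x c⁆ = mulSingle x ⁅(f : B → A) x, c⁆ :=
  Subtype.ext (Pi.commutatorElement_mulSingle (f : B → A) x c)

theorem mem_of_forall_mulSingle_mem {S : Subgroup (restrictedBase A B)} {H : Subgroup A}
    (hS : ∀ x, H ≤ S.comap (mulSingle x)) (f : restrictedBase A B)
    (hf : ∀ x, (f : B → A) x ∈ H) : f ∈ S := by
  suffices ∀ s : Finset B, ∀ f : restrictedBase A B, mulSupport (f : B → A) ⊆ s →
      (∀ x, (f : B → A) x ∈ H) → f ∈ S from
    this f.2.toFinset f f.2.coe_toFinset.ge hf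
  intro s
  induction s using Finset.induction_on with
  | empty =>
    intro f hsupp _
    have : f = 1 := Subtype.ext (mulSupport_eq_empty_iff.mp (by simpa using hsupp))
    exact this ▸ S.one_mem
  | @insert x t _ ih =>
    intro f hsupp hf
    set g := (mulSingle x ((f : B → A) x))⁻¹ * f
    have hg : ∀ y,
        (g : B → A) y = ((Pi.mulSingle x ((f : B → A) x) : B → A) y)⁻¹ * (f : B → A) y :=
      fun _ => rfl
    have hg_supp : mulSupport (g : B → A) ⊆ t := by
      intro y hy
      have hyx : y ≠ x := by rintro rfl; simp [hg] at hy
      have hyf : y ∈ mulSupport (f : B → A) := by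
        simpa [hg, Pi.mulSingle_eq_of_ne hyx] using hy
      simpa [hyx] using hsupp hyf
    have hg_mem : ∀ y, (g : B → A) y ∈ H := by
      intro y
      rw [hg, Pi.mulSingle_apply]
      split_ifs with hyx
      · exact H.mul_mem (H.inv_mem (hyx ▸ hf x)) (hf y)
      · simpa using hf y
    simpa [g] using S.mul_mem (hS x (hf x)) (ih g hg_supp hg_mem)

theorem mulSingle_commutatorElement_mem {M : Subgroup (restrictedBase A B)} [M.Normal]
    {x y : B} (hyx : y ≠ x) {a : A} (h : mulSingle x a * mulSingle y a⁻¹ ∈ M) (c : A) :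
    mulSingle x ⁅a, c⁆ ∈ M := by
  have := Subgroup.commutator_le_left M ⊤
    (Subgroup.commutator_mem_commutator h (Subgroup.mem_top (mulSingle x c)))
  have hx : ((mulSingle x a * mulSingle y a⁻¹ : restrictedBase A B) : B → A) x = a := by
    simp [Pi.mulSingle_eq_of_ne' hyx]
  rwa [commutatorElement_mulSingle, hx] at this

theorem inl_mulSingle_mul_mulSingle_inv_mem {N : Subgroup (Wreath A B)} [N.Normal] {b : B}
    (hbN : inr b ∈ N) (x : B) (a : A) :
    (inl (mulSingle x a * mulSingle (b * x) a⁻¹) : Wreath A B) ∈ N := by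
  have := Subgroup.commutator_le_right ⊤ N (Subgroup.commutator_mem_commutator
    (Subgroup.mem_top (inl (mulSingle x a) : Wreath A B)) hbN)
  rwa [commutatorElement_inl_inr, ← map_inv, wreathHom_mulSingle] at this

theorem commutator_le_comap_mulSingle {N : Subgroup (Wreath A B)} [N.Normal] {b : B}
    (hb : b ≠ 1) (hbN : inr b ∈ N) (x : B) :
    commutator A ≤ (N.comap inl).comap (mulSingle x) := by
  rw [commutator_def, Subgroup.commutator_le]
  intro a _ c _
  exact mulSingle_commutatorElement_mem (M := N.comap inl) (mul_ne_right.mpr hb)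
    (inl_mulSingle_mul_mulSingle_inv_mem hbN x a) c

end restrictedBase

/-- If `N ◁ A ≀ B` intersects the canonical copy of `B` nontrivially, then
every finitely supported function `B → [A,A]` lies in `N`. -/
theorem stmt5 (A B : Type*) [Group A] [Group B] (N : Subgroup (Wreath A B)) [N.Normal]
    (h : ∃ b : B, b ≠ 1 ∧ (SemidirectProduct.inr b : Wreath A B) ∈ N) :
    ∀ f : restrictedBase A B, (∀ x : B, (f : B → A) x ∈ commutator A) →
      (SemidirectProduct.inl f : Wreath A B) ∈ N := by
  classical
  obtain ⟨b, hb, hbN⟩ := h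
  intro f hf
  exact restrictedBase.mem_of_forall_mulSingle_mem (S := N.comap inl)
    (restrictedBase.commutator_le_comap_mulSingle hb hbN) f hf
end
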